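/- arXiv:2007.12017 — 2 statements merged into one kernel-verified Lean document; each statement's English description precedes it below -/
import Mathlib

section
/- Let E be a reflexive Banach space, S a nonempty set, c : S → E bounded, X ⊆ ℓ^∞(S) a subspace containing constants, all coordinate functions s ↦ ⟨c(s), x*⟩, and all functions s ↦ D_g(c(s), x) for x ∈ E, where g : E → ℝ is a strictly convex Gâteaux differentiable function that is bounded on bounded sets. Let μ be a mean on X and z_μ its barycenter. Then for every x ∈ E, μ_s D_g(c(s), x) − μ_s D_g(c(s), z_μ) = D_g(z_μ, x). In particular z_μ is the unique minimizer over x ∈ E of x ↦ μ_s D_g(c(s), x). -/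
open Set Function

theorem StrictConvexOn.comp_affineMap {𝕜 E F β : Type*} [Field 𝕜] [LinearOrder 𝕜]
    [IsStrictOrderedRing 𝕜] [AddCommGroup E] [AddCommGroup F] [Module 𝕜 E] [Module 𝕜 F]
    [AddCommMonoid β] [PartialOrder β] [SMul 𝕜 β] {f : F → β} {s : Set F}
    (hf : StrictConvexOn 𝕜 s f) (g : E →ᵃ[𝕜] F) (hg : Injective g) :
    StrictConvexOn 𝕜 (g ⁻¹' s) (f ∘ g) :=
  ⟨hf.1.affine_preimage g, fun _ hx _ hy hxy _ _ ha hb hab => by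
    simpa only [comp_apply, Convex.combo_affine_apply hab] using
      hf.2 hx hy (hg.ne hxy) ha hb hab⟩

section Tangent

variable {E : Type*} [AddCommGroup E] [Module ℝ E] {g : E → ℝ} {x z : E} {d : ℝ}

private lemma comp_lineMap_eq (g : E → ℝ) (x z : E) :
    g ∘ AffineMap.lineMap x z = fun t : ℝ => g (x + t • (z - x)) := by
  ext t
  simp only [comp_apply, AffineMap.lineMap_apply_module', add_comm]

theorem ConvexOn.le_sub_of_hasDerivAt_line (hg : ConvexOn ℝ univ g)
    (hd : HasDerivAt (fun t : ℝ => g (x + t • (z - x))) d 0) : d ≤ g z - g x := by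
  rw [← comp_lineMap_eq] at hd
  simpa [slope_def_field] using
    (hg.comp_affineMap (AffineMap.lineMap x z)).le_slope_of_hasDerivAt
      (mem_univ 0) (mem_univ 1) one_pos hd

theorem StrictConvexOn.lt_sub_of_hasDerivAt_line (hg : StrictConvexOn ℝ univ g) (hxz : x ≠ z)
    (hd : HasDerivAt (fun t : ℝ => g (x + t • (z - x))) d 0) : d < g z - g x := by
  rw [← comp_lineMap_eq] at hd
  simpa [slope_def_field] using
    (hg.comp_affineMap (AffineMap.lineMap x z)
      (AffineMap.lineMap_injective ℝ hxz)).lt_slope_of_hasDerivAt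
        (mem_univ 0) (mem_univ 1) one_pos hd

end Tangent

section Bregman

variable {E : Type*} [AddCommGroup E] [Module ℝ E] [TopologicalSpace E]

def bregmanDiv (g : E → ℝ) (grad : E → StrongDual ℝ E) (x y : E) : ℝ :=
  g x - g y - grad y (x - y)

variable {g : E → ℝ} {grad : E → StrongDual ℝ E}

theorem bregmanDiv_sub_bregmanDiv (w x z : E) :
    bregmanDiv g grad w x - bregmanDiv g grad w z =
      bregmanDiv g grad z x + (grad z - grad x) (w - z) := by
  simp only [bregmanDiv, map_sub, sub_apply]
  ring

theorem ConvexOn.bregmanDiv_nonneg (hg : ConvexOn ℝ univ g) {x y : E}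
    (hd : HasDerivAt (fun t : ℝ => g (y + t • (x - y))) (grad y (x - y)) 0) :
    0 ≤ bregmanDiv g grad x y :=
  sub_nonneg.2 (hg.le_sub_of_hasDerivAt_line hd)

theorem StrictConvexOn.bregmanDiv_pos (hg : StrictConvexOn ℝ univ g) {x y : E} (hxy : x ≠ y)
    (hd : HasDerivAt (fun t : ℝ => g (y + t • (x - y))) (grad y (x - y)) 0) :
    0 < bregmanDiv g grad x y :=
  sub_pos.2 (hg.lt_sub_of_hasDerivAt_line hxy.symm hd)

end Bregman

theorem LinearMap.map_eq_const_add {S : Type*} {X : Submodule ℝ (S → ℝ)} (μ : X →ₗ[ℝ] ℝ)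
    {one f h : X} (hone : ∀ s, (one : S → ℝ) s = 1) (hμ1 : μ one = 1) {a : ℝ}
    (hf : ∀ s, (f : S → ℝ) s = a + (h : S → ℝ) s) : μ f = a + μ h := by
  have : f = a • one + h := Subtype.ext <| funext fun s => by simp [hf, hone]
  rw [this, map_add, map_smul, hμ1, smul_eq_mul, mul_one]

theorem barycenter_unique_minimizer_general
    {E : Type*} [NormedAddCommGroup E] [NormedSpace ℝ E]
    {S : Type*}
    (g : E → ℝ) (hconv : StrictConvexOn ℝ Set.univ g)
    (grad : E → (E →L[ℝ] ℝ))
    (hdiff : ∀ y : E, ∀ v : E, HasDerivAt (fun t : ℝ => g (y + t • v)) (grad y v) 0)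
    (D : E → E → ℝ)
    (hD : ∀ x y, D x y = g x - g y - grad y (x - y))
    (c : S → E)
    (X : Submodule ℝ (S → ℝ))
    (hconst : ∀ r : ℝ, (fun _ : S => r) ∈ X)
    (hcoord : ∀ φ : StrongDual ℝ E, (fun s => φ (c s)) ∈ X)
    (hDmem : ∀ x : E, (fun s => D (c s) x) ∈ X)
    (μ : X →ₗ[ℝ] ℝ)
    (hμ1 : μ ⟨fun _ => (1 : ℝ), hconst 1⟩ = 1)
    (z : E)
    (hz : ∀ φ : StrongDual ℝ E, μ ⟨fun s => φ (c s), hcoord φ⟩ = φ z) :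
    (∀ x : E,
        μ ⟨fun s => D (c s) x, hDmem x⟩ - μ ⟨fun s => D (c s) z, hDmem z⟩ = D z x) ∧
    (∀ x : E, μ ⟨fun s => D (c s) z, hDmem z⟩ ≤ μ ⟨fun s => D (c s) x, hDmem x⟩) ∧
    (∀ x : E,
        μ ⟨fun s => D (c s) x, hDmem x⟩ = μ ⟨fun s => D (c s) z, hDmem z⟩ → x = z) := by
  obtain rfl : D = bregmanDiv g grad := funext₂ hD
  have three_point (x : E) :
      μ ⟨_, hDmem x⟩ - μ ⟨_, hDmem z⟩ = bregmanDiv g grad z x := by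
    set φ := grad z - grad x
    have hsplit (s : S) : ((⟨_, hDmem x⟩ - ⟨_, hDmem z⟩ : X) : S → ℝ) s =
        (bregmanDiv g grad z x - φ z) + ((⟨_, hcoord φ⟩ : X) : S → ℝ) s := by
      simp only [Submodule.coe_sub, Pi.sub_apply, bregmanDiv_sub_bregmanDiv, φ, map_sub]
      ring
    -- the cross term `φ (c s - z)` has mean zero because `z` is the barycenter
    rw [← map_sub, μ.map_eq_const_add (fun _ => rfl) hμ1 hsplit, hz]
    ring
  refine ⟨three_point, fun x => ?_, fun x hx => ?_⟩
  · linarith [three_point x, hconv.convexOn.bregmanDiv_nonneg (hdiff x (z - x))]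
  · by_contra hxz
    linarith [three_point x, hconv.bregmanDiv_pos (Ne.symm hxz) (hdiff x (z - x))]

/-- For the barycenter `z` of a bounded orbit `c : S → E` w.r.t. a mean `μ`,
`μ_s D_g(c(s), x) - μ_s D_g(c(s), z) = D_g(z, x)` for every `x ∈ E`; in particular
`z` is the unique minimizer of `x ↦ μ_s D_g(c(s), x)`. -/
theorem barycenter_unique_minimizer
    {E : Type*} [NormedAddCommGroup E] [NormedSpace ℝ E] [CompleteSpace E]
    (hrefl : Function.Surjective (NormedSpace.inclusionInDoubleDual ℝ E))
    {S : Type*} [Nonempty S]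
    (g : E → ℝ) (hconv : StrictConvexOn ℝ Set.univ g)
    (grad : E → (E →L[ℝ] ℝ))
    (hdiff : ∀ y : E, ∀ v : E, HasDerivAt (fun t : ℝ => g (y + t • v)) (grad y v) 0)
    (hgbdd : ∀ r : ℝ, ∃ M : ℝ, ∀ x : E, ‖x‖ ≤ r → |g x| ≤ M)
    (D : E → E → ℝ)
    (hD : ∀ x y, D x y = g x - g y - grad y (x - y))
    (c : S → E) (Mc : ℝ) (hcbdd : ∀ s : S, ‖c s‖ ≤ Mc)
    (X : Submodule ℝ (S → ℝ))
    (hconst : ∀ r : ℝ, (fun _ : S => r) ∈ X)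
    (hcoord : ∀ φ : StrongDual ℝ E, (fun s => φ (c s)) ∈ X)
    (hDmem : ∀ x : E, (fun s => D (c s) x) ∈ X)
    (μ : X →ₗ[ℝ] ℝ)
    (hμ1 : μ ⟨fun _ => (1 : ℝ), hconst 1⟩ = 1)
    (hpos : ∀ f : X, (∀ t : S, 0 ≤ (f : S → ℝ) t) → 0 ≤ μ f)
    (z : E)
    (hz : ∀ φ : StrongDual ℝ E, μ ⟨fun s => φ (c s), hcoord φ⟩ = φ z) :
    (∀ x : E,
        μ ⟨fun s => D (c s) x, hDmem x⟩ - μ ⟨fun s => D (c s) z, hDmem z⟩ = D z x) ∧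
    (∀ x : E, μ ⟨fun s => D (c s) z, hDmem z⟩ ≤ μ ⟨fun s => D (c s) x, hDmem x⟩) ∧
    (∀ x : E,
        μ ⟨fun s => D (c s) x, hDmem x⟩ = μ ⟨fun s => D (c s) z, hDmem z⟩ → x = z) :=
  barycenter_unique_minimizer_general g hconv grad hdiff D hD c X hconst hcoord hDmem μ hμ1 z hz
end

section
/- Let S be a semigroup, X a translation invariant subspace of ℓ^∞(S) containing constants, μ a right invariant mean on X, and f ∈ X. Suppose that for every ε > 0 there exists u ∈ S such that f(tus) ≤ f(s) + ε for all s, t ∈ S (restricting to those translates lying in X). Then inf_{s} sup_{t} f(ts) ≤ μ(f) + 0, i.e., inf_{s ∈ S} sup_{t ∈ S} f(ts) ≤ μ(f); combined with the general bound μ(f) ≤ inf_s sup_t f(ts), one gets μ(f) = inf_{s} sup_{t} f(ts). -/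
/-- If `μ` is a right invariant mean on a translation invariant subspace `X ⊆ ℓ^∞(S)`
containing constants, and `f ∈ X` satisfies: for each `ε > 0` there is `u ∈ S` with
`f(tus) ≤ f(s) + ε` for all `s, t`, then
`inf_s sup_t f(ts) ≤ μ(f)`, and hence `μ(f) = inf_s sup_t f(ts)`. -/
theorem right_invariant_mean_eq_infSup
    {S : Type*} [Semigroup S] [Nonempty S]
    (X : Submodule ℝ (S → ℝ))
    (hbdd : ∀ f ∈ X, ∃ M : ℝ, ∀ t : S, |f t| ≤ M)
    (hconst : ∀ r : ℝ, (fun _ : S => r) ∈ X)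
    (hLtrans : ∀ (s : S), ∀ f ∈ X, (fun t : S => f (s * t)) ∈ X)
    (hRtrans : ∀ (s : S), ∀ f ∈ X, (fun t : S => f (t * s)) ∈ X)
    (μ : X →ₗ[ℝ] ℝ)
    (hμ1 : μ ⟨fun _ => (1 : ℝ), hconst 1⟩ = 1)
    (hpos : ∀ f : X, (∀ t : S, 0 ≤ (f : S → ℝ) t) → 0 ≤ μ f)
    (hrinv : ∀ (s : S) (f : X), μ ⟨fun t => (f : S → ℝ) (t * s), hRtrans s f f.2⟩ = μ f)
    (f : X)
    (hasym : ∀ ε : ℝ, 0 < ε → ∃ u : S, ∀ s t : S,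
      (f : S → ℝ) (t * u * s) ≤ (f : S → ℝ) s + ε) :
    ((⨅ s : S, ⨆ t : S, (f : S → ℝ) (t * s)) ≤ μ f) ∧
    μ f = ⨅ s : S, ⨆ t : S, (f : S → ℝ) (t * s) := by
  classical
  obtain ⟨M, hM⟩ := hbdd f f.2
  have hle : ∀ t : S, (f : S → ℝ) t ≤ M := fun t => (abs_le.1 (hM t)).2
  have hge : ∀ t : S, -M ≤ (f : S → ℝ) t := fun t => (abs_le.1 (hM t)).1
  -- μ of constants
  have hμconst : ∀ r : ℝ, μ ⟨fun _ => r, hconst r⟩ = r := by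
    intro r
    have h : (⟨fun _ => r, hconst r⟩ : X) = r • (⟨fun _ => (1 : ℝ), hconst 1⟩ : X) := by
      apply Subtype.ext
      funext t
      simp
    rw [h, map_smul, hμ1, smul_eq_mul, mul_one]
  -- monotonicity
  have hmono : ∀ g h : X, (∀ t, (g : S → ℝ) t ≤ (h : S → ℝ) t) → μ g ≤ μ h := by
    intro g h hgh
    have h0 : 0 ≤ μ (h - g) := by
      apply hpos
      intro t
      have : ((h - g : X) : S → ℝ) t = (h : S → ℝ) t - (g : S → ℝ) t := rfl
      rw [this]
      linarith [hgh t]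
    rw [map_sub] at h0
    linarith
  -- boundedness of families
  have hbA : ∀ s : S, BddAbove (Set.range fun t : S => (f : S → ℝ) (t * s)) := by
    intro s
    exact ⟨M, by rintro x ⟨t, rfl⟩; exact hle _⟩
  have hsup_ge : ∀ s : S, (-M : ℝ) ≤ ⨆ t : S, (f : S → ℝ) (t * s) := by
    intro s
    obtain ⟨t₀⟩ : Nonempty S := inferInstance
    exact le_trans (hge (t₀ * s)) (le_ciSup (hbA s) t₀)
  have hbB : BddBelow (Set.range fun s : S => ⨆ t : S, (f : S → ℝ) (t * s)) :=
    ⟨-M, by rintro x ⟨s, rfl⟩; exact hsup_ge s⟩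
  -- part 2: μ f ≤ inf sup
  have h2 : μ f ≤ ⨅ s : S, ⨆ t : S, (f : S → ℝ) (t * s) := by
    apply le_ciInf
    intro s
    have h1 : μ f = μ ⟨fun t => (f : S → ℝ) (t * s), hRtrans s f f.2⟩ := (hrinv s f).symm
    rw [h1]
    have := hmono ⟨fun t => (f : S → ℝ) (t * s), hRtrans s f f.2⟩
      ⟨fun _ => ⨆ t : S, (f : S → ℝ) (t * s), hconst _⟩
      (fun t => le_ciSup (hbA s) t)
    rw [hμconst] at this
    exact this
  -- part 1: inf sup ≤ μ f
  have h1 : (⨅ s : S, ⨆ t : S, (f : S → ℝ) (t * s)) ≤ μ f := by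
    apply le_of_forall_pos_le_add
    intro ε hε
    obtain ⟨u, hu⟩ := hasym ε hε
    have key : ∀ s : S, (⨅ s : S, ⨆ t : S, (f : S → ℝ) (t * s)) - ε ≤ (f : S → ℝ) s := by
      intro s
      have hI : (⨅ s : S, ⨆ t : S, (f : S → ℝ) (t * s)) ≤
          ⨆ t : S, (f : S → ℝ) (t * (u * s)) := ciInf_le hbB (u * s)
      have hS : (⨆ t : S, (f : S → ℝ) (t * (u * s))) ≤ (f : S → ℝ) s + ε := by
        apply ciSup_le
        intro t
        rw [← mul_assoc]
        exact hu s t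
      linarith
    have := hmono ⟨fun _ => (⨅ s : S, ⨆ t : S, (f : S → ℝ) (t * s)) - ε, hconst _⟩ f key
    rw [hμconst] at this
    linarith
  exact ⟨h1, le_antisymm h2 h1⟩
end
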